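/- arXiv:1312.2628 — 2 statements merged into one kernel-verified Lean document; each statement's English description precedes it below -/
import Mathlib

section
/- For all integers N ≥ 2 and B ≥ 2, 2·⌈T/2^k⌉ ≤ 4·⌈(log₂ N + 1)/log₂(B+1)⌉ whenever T ≤ log₂ N + 1 and 2^k ≥ (1/2)·log₂(B+1). -/
/-- For all integers `N ≥ 2` and `B ≥ 2`,
`2·⌈T/2^k⌉ ≤ 4·⌈(log₂ N + 1)/log₂(B+1)⌉` whenever `T ≤ log₂ N + 1` and
`2^k ≥ (1/2)·log₂(B+1)`. -/
theorem stmt_3 (N B : ℕ) (hN : 2 ≤ N) (hB : 2 ≤ B) (T : ℝ) (hT : 0 < T) (k : ℕ)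
    (hTN : T ≤ Real.logb 2 N + 1)
    (hk : (2 : ℝ) ^ k ≥ (1 / 2) * Real.logb 2 (B + 1)) :
    2 * ⌈T / (2 : ℝ) ^ k⌉ ≤ 4 * ⌈(Real.logb 2 N + 1) / Real.logb 2 (B + 1)⌉ := by
  set L := Real.logb 2 N + 1 with hL
  set l := Real.logb 2 (B + 1) with hl
  have hl1 : (1 : ℝ) < l := by
    rw [hl]
    have : (2 : ℝ) < (B : ℝ) + 1 := by
      have : (2 : ℝ) ≤ (B : ℝ) := by exact_mod_cast hB
      linarith
    calc (1 : ℝ) = Real.logb 2 2 := by simp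
    _ < Real.logb 2 (B + 1) := by
        apply Real.logb_lt_logb one_lt_two (by norm_num) this
  have hlpos : 0 < l := by linarith
  have hL0 : 0 ≤ L := le_trans hT.le hTN
  have hkpos : (0 : ℝ) < l / 2 := by linarith
  have hdiv : T / (2 : ℝ) ^ k ≤ 2 * (L / l) := by
    have h1 : T / (2 : ℝ) ^ k ≤ L / (l / 2) := by
      apply div_le_div₀ hL0 hTN hkpos
      linarith [hk]
    have h2 : L / (l / 2) = 2 * (L / l) := by
      field_simp
    linarith [h1, h2 ▸ h1]
  have h3 : ⌈T / (2 : ℝ) ^ k⌉ ≤ 2 * ⌈L / l⌉ := by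
    apply Int.ceil_le.mpr
    push_cast
    calc T / (2 : ℝ) ^ k ≤ 2 * (L / l) := hdiv
    _ ≤ 2 * (⌈L / l⌉ : ℝ) := by
        have := Int.le_ceil (L / l)
        linarith
  linarith
end

section
/- The expected height of a randomly built binary search tree on n distinct keys is O(log n); more precisely, the expected height is at most 3·log₂ n for all n ≥ 2. -/
/-!
Instead of the height `H` one bounds the mean of `2 ^ H`. The root of the tree is the first key
`x` inserted, and the keys below `x` (resp. above `x`) reach the left (resp. right) subtree in a
uniformly random order, so the subtrees are again random BSTs. Since
`2 ^ H ≤ 2 * 2 ^ H_left + 2 * 2 ^ H_right - 2`, the mean of `2 ^ H` over `n` keys is at most the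
solution `((n + 1) (n + 2) (n + 3) + 12) / 18 ≤ n ^ 3` of a linear recurrence, and Jensen's
inequality for the convex map `t ↦ 2 ^ t` gives `2 ^ (mean of H) ≤ n ^ 3`.
-/

/-- Binary search trees with natural-number keys. -/
inductive BT : Type
  | nil : BT
  | node (l : BT) (k : ℕ) (r : BT) : BT

namespace BT

/-- Standard BST insertion. -/
def ins (v : ℕ) : BT → BT
  | nil => node nil v nil
  | node l k r => if v < k then node (ins v l) k r else node l k (ins v r)

/-- Height: number of nodes on the longest root-to-leaf path. -/
def height : BT → ℕ
  | nil => 0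
  | node l _ r => 1 + max (height l) (height r)

/-- Build a BST by inserting the keys of a list in order into an empty tree. -/
def build (xs : List ℕ) : BT := xs.foldl (fun t v => ins v t) nil

end BT

open Finset
open scoped BigOperators Nat

namespace Finset

variable {α : Type*} [DecidableEq α]

noncomputable def orderings (s : Finset α) : Finset (List α) := s.toList.permutations.toFinset

theorem mem_orderings {s : Finset α} {xs : List α} :
    xs ∈ orderings s ↔ xs.Nodup ∧ xs.toFinset = s := by
  rw [orderings, List.mem_toFinset, List.mem_permutations]
  constructor
  · intro h
    refine ⟨h.nodup_iff.2 s.nodup_toList, ?_⟩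
    ext a; simp [h.mem_iff]
  · rintro ⟨hnd, rfl⟩
    exact (List.perm_ext_iff_of_nodup hnd (Finset.nodup_toList _)).2 (by simp)

@[simp] theorem orderings_empty : orderings (∅ : Finset α) = {[]} := by
  ext xs
  simp only [mem_orderings, List.toFinset_eq_empty_iff, mem_singleton]
  exact ⟨And.right, fun h => ⟨h ▸ List.nodup_nil, h⟩⟩

theorem cons_mem_orderings {s : Finset α} {x : α} {ys : List α} :
    x :: ys ∈ orderings s ↔ x ∈ s ∧ ys ∈ orderings (s.erase x) := by
  simp only [mem_orderings, List.nodup_cons, List.toFinset_cons]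
  constructor
  · rintro ⟨⟨hx, hnd⟩, rfl⟩
    exact ⟨mem_insert_self _ _, hnd, by rw [erase_insert (by simpa using hx)]⟩
  · rintro ⟨hx, hnd, hys⟩
    refine ⟨⟨fun h => ?_, hnd⟩, by rw [hys, insert_erase hx]⟩
    simpa using (hys ▸ List.mem_toFinset.2 h : x ∈ s.erase x)

theorem card_orderings (s : Finset α) : #(orderings s) = (#s)! := by
  rw [orderings, List.toFinset_card_of_nodup (List.nodup_permutations _ s.nodup_toList),
    List.length_permutations, length_toList]

theorem orderings_nonempty (s : Finset α) : (orderings s).Nonempty :=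
  ⟨s.toList, mem_orderings.2 ⟨s.nodup_toList, toList_toFinset s⟩⟩

theorem orderings_eq_biUnion {s : Finset α} (hs : s.Nonempty) :
    orderings s = s.biUnion fun x => (orderings (s.erase x)).image (x :: ·) := by
  ext xs
  rcases xs with _ | ⟨x, ys⟩
  · simp [mem_orderings, hs.ne_empty.symm]
  · simp [cons_mem_orderings]

theorem sum_orderings {M : Type*} [AddCommMonoid M] {s : Finset α} (hs : s.Nonempty)
    (g : List α → M) :
    ∑ xs ∈ orderings s, g xs = ∑ x ∈ s, ∑ ys ∈ orderings (s.erase x), g (x :: ys) := by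
  rw [orderings_eq_biUnion hs, sum_biUnion]
  · exact sum_congr rfl fun x _ => sum_image fun _ _ _ _ h => List.cons_injective h
  · intro x _ y _ hxy
    simp only [Function.onFun, disjoint_left, mem_image]
    rintro _ ⟨ys, -, rfl⟩ ⟨zs, -, h⟩
    exact hxy (List.cons_eq_cons.1 h).1.symm

variable {K : Type*} [Semifield K] [CharZero K]

theorem sum_expect_orderings_erase (s : Finset α) (g : List α → K) :
    ∑ x ∈ s, 𝔼 ys ∈ orderings (s.erase x), g (x :: ys) = #s * 𝔼 xs ∈ orderings s, g xs := by
  rcases s.eq_empty_or_nonempty with rfl | hs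
  · simp
  obtain ⟨N, hN⟩ : ∃ N, #s = N + 1 := Nat.exists_eq_succ_of_ne_zero hs.card_pos.ne'
  simp only [expect_eq_sum_div_card, card_orderings, hN, sum_orderings hs g, sum_div, mul_sum]
  refine sum_congr rfl fun x hx => ?_
  rw [card_erase_of_mem hx, hN, Nat.add_sub_cancel, Nat.factorial_succ]
  push_cast
  field_simp

theorem expect_orderings_filter (p : α → Prop) [DecidablePred p] (s : Finset α)
    (g : List α → K) :
    𝔼 xs ∈ orderings s, g (xs.filter (p ·)) = 𝔼 zs ∈ orderings (s.filter p), g zs := by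
  induction s using Finset.strongInduction generalizing g with | H s ih =>
  rcases s.eq_empty_or_nonempty with rfl | hs
  · simp
  have step : ∀ x ∈ s, 𝔼 ys ∈ orderings (s.erase x), g ((x :: ys).filter (p ·)) =
      if p x then 𝔼 zs ∈ orderings ((s.filter p).erase x), g (x :: zs)
      else 𝔼 zs ∈ orderings (s.filter p), g zs := by
    intro x hx
    split_ifs with hpx
    · simp only [List.filter_cons, hpx, decide_true, if_true]
      rw [ih _ (erase_ssubset hx) (g <| x :: ·), filter_erase]
    · simp only [List.filter_cons, hpx, decide_false, Bool.false_eq_true, if_false]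
      rw [ih _ (erase_ssubset hx), filter_erase, erase_eq_of_notMem (by simp [hpx])]
  refine mul_left_cancel₀ (Nat.cast_ne_zero.2 hs.card_pos.ne' : (#s : K) ≠ 0) ?_
  rw [← sum_expect_orderings_erase, sum_congr rfl step, sum_ite,
    sum_expect_orderings_erase, sum_const, nsmul_eq_mul, ← add_mul]
  norm_cast
  rw [card_filter_add_card_filter_not]

end Finset

namespace Finset

variable {α M : Type*} [LinearOrder α] [AddCommMonoid M]

theorem sum_card_filter_lt (s : Finset α) (f : ℕ → M) :
    ∑ x ∈ s, f #{y ∈ s | y < x} = ∑ i ∈ range #s, f i := by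
  induction s using Finset.induction_on_max with
  | empty => simp
  | insert a s ha ih =>
    have ha' : a ∉ s := fun h => lt_irrefl a (ha a h)
    have hlt : {y ∈ insert a s | y < a} = s := by
      ext y; simp only [mem_filter, mem_insert]
      exact ⟨fun ⟨h, hy⟩ => h.resolve_left hy.ne, fun h => ⟨Or.inr h, ha y h⟩⟩
    have hrest : ∀ x ∈ s, {y ∈ insert a s | y < x} = {y ∈ s | y < x} := fun x hx => by
      rw [filter_insert, if_neg (ha x hx).not_gt]
    rw [sum_insert ha', hlt, sum_congr rfl fun x hx => by rw [hrest x hx], ih,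
      card_insert_of_notMem ha', sum_range_succ, add_comm]

theorem sum_card_filter_gt (s : Finset α) (f : ℕ → M) :
    ∑ x ∈ s, f #{y ∈ s | x < y} = ∑ i ∈ range #s, f i :=
  sum_card_filter_lt (α := αᵒᵈ) s f

end Finset

namespace BT

theorem foldl_ins_node (xs : List ℕ) (l : BT) (k : ℕ) (r : BT) :
    xs.foldl (fun t v => ins v t) (node l k r) =
      node ((xs.filter (· < k)).foldl (fun t v => ins v t) l) k
        ((xs.filter (¬ · < k)).foldl (fun t v => ins v t) r) := by
  induction xs generalizing l r with
  | nil => rfl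
  | cons y ys ih =>
    by_cases h : y < k
    · simp [ins, h, ih]
    · simp [ins, h, ih, not_lt.1 h]

theorem build_cons (x : ℕ) (ys : List ℕ) :
    build (x :: ys) = node (build (ys.filter (· < x))) x (build (ys.filter (¬ · < x))) :=
  foldl_ins_node ys nil x nil

theorem two_pow_height_node_le (l : BT) (k : ℕ) (r : BT) :
    (2 : ℝ) ^ (node l k r).height ≤ 2 * 2 ^ l.height + 2 * 2 ^ r.height - 2 := by
  have hl : (1 : ℝ) ≤ 2 ^ l.height := one_le_pow₀ one_le_two
  have hr : (1 : ℝ) ≤ 2 ^ r.height := one_le_pow₀ one_le_two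
  rw [height, pow_add, pow_one]
  rcases le_total l.height r.height with h | h
  · rw [max_eq_right h]; linarith
  · rw [max_eq_left h]; linarith

theorem two_pow_height_build_cons_le (x : ℕ) (ys : List ℕ) :
    (2 : ℝ) ^ (build (x :: ys)).height ≤
      2 * 2 ^ (build (ys.filter (· < x))).height +
        2 * 2 ^ (build (ys.filter (¬ · < x))).height - 2 := by
  rw [build_cons]
  exact two_pow_height_node_le _ _ _

end BT

theorem rpow_expect_le_expect_rpow {ι : Type*} {s : Finset ι} {b : ℝ} (hb : 0 < b)
    (hs : s.Nonempty) (f : ι → ℝ) : b ^ (𝔼 i ∈ s, f i) ≤ 𝔼 i ∈ s, b ^ f i := by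
  have h := (convexOn_rpow_left hb).map_sum_le (t := s) (w := fun _ => (#s : ℝ)⁻¹) (p := f)
    (fun _ _ => by positivity) (by simp [hs.card_pos.ne']) (fun _ _ => Set.mem_univ _)
  simpa only [expect_eq_sum_div_card, smul_eq_mul, ← mul_sum, inv_mul_eq_div, sum_div] using h

theorem expect_perm_eq_expect_orderings_range {K : Type*} [Semifield K] [CharZero K] (n : ℕ)
    (g : List ℕ → K) :
    𝔼 σ : Equiv.Perm (Fin n), g (List.ofFn fun i => (σ i : ℕ)) =
      𝔼 xs ∈ orderings (range n), g xs := by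
  let e (σ : Equiv.Perm (Fin n)) : List ℕ := List.ofFn fun i => (σ i : ℕ)
  have he : Function.Injective e := fun σ τ h =>
    Equiv.ext fun i => Fin.ext (congrFun (List.ofFn_injective h) i)
  have himage : univ.image e = orderings (range n) := by
    refine eq_of_subset_of_card_le (fun xs hxs => ?_) ?_
    · obtain ⟨σ, -, rfl⟩ := mem_image.1 hxs
      refine mem_orderings.2 ⟨List.nodup_ofFn.2 (Fin.val_injective.comp σ.injective), ?_⟩
      ext y
      simp only [e, List.mem_toFinset, List.mem_ofFn, mem_range]
      exact ⟨fun ⟨i, hi⟩ => hi ▸ (σ i).isLt, fun hy => ⟨σ.symm ⟨y, hy⟩, by simp⟩⟩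
    · rw [card_image_of_injective _ he, card_orderings, card_range, card_univ,
        Fintype.card_perm, Fintype.card_fin]
  rw [← himage, expect_image he.injOn]

open BT

/-- Exact solution of `f 0 = 1`, `(N + 1) * f (N + 1) = 4 * ∑ i ≤ N, f i - 2 * (N + 1)`, the
recurrence that the root decomposition gives for the mean of `2 ^ height`. -/
noncomputable def expHeightBound (N : ℕ) : ℝ := ((N + 1) * (N + 2) * (N + 3) + 12) / 18

theorem four_mul_sum_range_expHeightBound (N : ℕ) :
    4 * ∑ i ∈ range N, expHeightBound i = N * (expHeightBound N + 2) := by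
  induction N with
  | zero => simp
  | succ N ih =>
    rw [sum_range_succ, mul_add, ih]
    simp only [expHeightBound]
    push_cast
    ring

theorem expHeightBound_le_cube {n : ℕ} (hn : 2 ≤ n) : expHeightBound n ≤ (n : ℝ) ^ 3 := by
  have h : (2 : ℝ) ≤ n := by exact_mod_cast hn
  rw [expHeightBound, div_le_iff₀ (by norm_num)]
  nlinarith [mul_le_mul h h (by norm_num) (by linarith)]

theorem expect_two_pow_height_build_cons_le (s : Finset ℕ) (x : ℕ) :
    𝔼 ys ∈ orderings (s.erase x), (2 : ℝ) ^ (build (x :: ys)).height ≤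
      2 * 𝔼 zs ∈ orderings {y ∈ s | y < x}, (2 : ℝ) ^ (build zs).height +
        2 * 𝔼 zs ∈ orderings {y ∈ s | x < y}, (2 : ℝ) ^ (build zs).height - 2 := by
  have hlt : {y ∈ s.erase x | y < x} = {y ∈ s | y < x} := by
    ext y; simp only [mem_filter, mem_erase]
    exact ⟨fun h => ⟨h.1.2, h.2⟩, fun h => ⟨⟨h.2.ne, h.1⟩, h.2⟩⟩
  have hgt : {y ∈ s.erase x | ¬ y < x} = {y ∈ s | x < y} := by
    ext y; simp only [mem_filter, mem_erase]
    exact ⟨fun h => ⟨h.1.2, lt_of_le_of_ne (not_lt.1 h.2) (Ne.symm h.1.1)⟩,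
      fun h => ⟨⟨h.2.ne', h.1⟩, h.2.not_gt⟩⟩
  calc _ ≤ 𝔼 ys ∈ orderings (s.erase x), (2 * 2 ^ (build (ys.filter (· < x))).height +
        2 * 2 ^ (build (ys.filter (¬ · < x))).height - 2 : ℝ) :=
        expect_le_expect fun ys _ => two_pow_height_build_cons_le x ys
    _ = _ := by
      rw [expect_sub_distrib, expect_add_distrib, ← mul_expect, ← mul_expect,
        expect_const (orderings_nonempty _),
        expect_orderings_filter (· < x) _ fun zs => (2 : ℝ) ^ (build zs).height,
        expect_orderings_filter (¬ · < x) _ fun zs => (2 : ℝ) ^ (build zs).height, hlt, hgt]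

theorem expect_two_pow_height_build_le (s : Finset ℕ) :
    𝔼 xs ∈ orderings s, (2 : ℝ) ^ (build xs).height ≤ expHeightBound #s := by
  induction s using Finset.strongInduction with | H s ih =>
  rcases s.eq_empty_or_nonempty with rfl | hs
  · norm_num [build, height, expHeightBound]
  have subtree_bound (x : ℕ) (hx : x ∈ s) :
      𝔼 ys ∈ orderings (s.erase x), (2 : ℝ) ^ (build (x :: ys)).height ≤
        2 * expHeightBound #{y ∈ s | y < x} + 2 * expHeightBound #{y ∈ s | x < y} - 2 := by
    grw [expect_two_pow_height_build_cons_le s x,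
      ih {y ∈ s | y < x} (filter_ssubset.2 ⟨x, hx, lt_irrefl x⟩),
      ih {y ∈ s | x < y} (filter_ssubset.2 ⟨x, hx, lt_irrefl x⟩)]
  have hcard : (0 : ℝ) < #s := by exact_mod_cast hs.card_pos
  refine le_of_mul_le_mul_left ?_ hcard
  calc (#s : ℝ) * 𝔼 xs ∈ orderings s, (2 : ℝ) ^ (build xs).height
      = ∑ x ∈ s, 𝔼 ys ∈ orderings (s.erase x), (2 : ℝ) ^ (build (x :: ys)).height :=
        (sum_expect_orderings_erase s _).symm
    _ ≤ ∑ x ∈ s, (2 * expHeightBound #{y ∈ s | y < x} +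
          2 * expHeightBound #{y ∈ s | x < y} - 2) := sum_le_sum subtree_bound
    _ = 4 * ∑ i ∈ range #s, expHeightBound i - 2 * #s := by
        rw [sum_sub_distrib, sum_add_distrib, ← mul_sum, ← mul_sum, sum_card_filter_lt,
          sum_card_filter_gt, sum_const, nsmul_eq_mul]
        ring
    _ = #s * expHeightBound #s := by
        rw [four_mul_sum_range_expHeightBound]
        ring

/-- The expected height of a randomly built binary search tree on `n`
distinct keys (inserted in uniformly random order) is `O(log n)`; more precisely,
the expected height is at most `3·log₂ n` for all `n ≥ 2`. -/
theorem stmt_19 (n : ℕ) (hn : 2 ≤ n) :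
    (∑ σ : Equiv.Perm (Fin n),
        ((BT.build (List.ofFn fun i : Fin n => (σ i : ℕ))).height : ℝ))
      / (Nat.factorial n) ≤ 3 * Real.logb 2 n := by
  have hmean : (∑ σ : Equiv.Perm (Fin n),
      ((build (List.ofFn fun i : Fin n => (σ i : ℕ))).height : ℝ)) / (Nat.factorial n) =
      𝔼 xs ∈ orderings (range n), ((build xs).height : ℝ) := by
    rw [← expect_perm_eq_expect_orderings_range, Fintype.expect_eq_sum_div_card,
      Fintype.card_perm, Fintype.card_fin]
  have hexp : (2 : ℝ) ^ (𝔼 xs ∈ orderings (range n), ((build xs).height : ℝ)) ≤ (n : ℝ) ^ 3 :=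
    calc _ ≤ 𝔼 xs ∈ orderings (range n), (2 : ℝ) ^ ((build xs).height : ℝ) :=
          rpow_expect_le_expect_rpow two_pos (orderings_nonempty _) _
      _ = 𝔼 xs ∈ orderings (range n), (2 : ℝ) ^ (build xs).height := by
          simp only [Real.rpow_natCast]
      _ ≤ expHeightBound #(range n) := expect_two_pow_height_build_le _
      _ ≤ (n : ℝ) ^ 3 := by rw [card_range]; exact expHeightBound_le_cube hn
  rw [hmean, show (3 : ℝ) = (3 : ℕ) by norm_num, ← Real.logb_pow,
    Real.le_logb_iff_rpow_le one_lt_two (by positivity)]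
  exact_mod_cast hexp
end
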